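/- arXiv:2208.03185 — 2 statements merged into one kernel-verified Lean document; each statement's English description precedes it below -/
import Mathlib

section
/- Let p ∈ (1, 2] and C_p = ((p-1)/p)^{p/2} · ((2-p)/(p-1))^{(2-p)/2} (interpreted as 1/2 when p = 2, taking 0⁰ = 1). Then for all x ∈ ℝ, 1 + x + C_p|x|^p > 0, so log(1 + x + C_p|x|^p) is well-defined. -/
noncomputable def catoniC (p : ℝ) : ℝ :=
  ((p - 1) / p) ^ (p / 2) * ((2 - p) / (p - 1)) ^ ((2 - p) / 2)

/-! For `x = -t < 0`, the convex function `t ↦ C t ^ p - t` is minimised at the point `t₀`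
where `p C t₀ ^ (p - 1) = 1`, with minimum `-(1 - 1/p) t₀`; so `1 + x + C |x| ^ p > 0` for all
`x` as soon as `K := p C (p / (p - 1)) ^ (p - 1) > 1`. For `C = C_p` one computes
`K = p ^ (p / 2) (2 - p) ^ ((2 - p) / 2)`, and `2 log K = p log p + (2 - p) log (2 - p) > 0`
by strict convexity of `x log x`, as `p ≠ 2 - p` have midpoint `1`. -/

open Real

lemma rpow_div_two_self_eq_exp {x : ℝ} (hx : 0 ≤ x) : x ^ (x / 2) = exp (x * log x / 2) := by
  rcases hx.eq_or_lt with rfl | hx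
  · simp
  · rw [rpow_def_of_pos hx]
    ring_nf

lemma one_lt_rpow_div_two_self_mul {a b : ℝ} (ha : 0 ≤ a) (hb : 0 ≤ b) (hab : a + b = 2)
    (hne : a ≠ b) : 1 < a ^ (a / 2) * b ^ (b / 2) := by
  have hmid := strictConvexOn_mul_log.2 ha hb hne (by norm_num : (0 : ℝ) < 1 / 2)
    (by norm_num : (0 : ℝ) < 1 / 2) (by norm_num)
  simp only [smul_eq_mul] at hmid
  rw [show 1 / 2 * a + 1 / 2 * b = (1 : ℝ) by linarith, one_mul, log_one] at hmid
  rw [rpow_div_two_self_eq_exp ha, rpow_div_two_self_eq_exp hb, ← exp_add]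
  exact one_lt_exp_iff.2 (by linarith)

lemma mul_catoniC_mul_rpow_eq {p : ℝ} (hp : p ∈ Set.Ioc (1 : ℝ) 2) :
    p * catoniC p * (p / (p - 1)) ^ (p - 1) = p ^ (p / 2) * (2 - p) ^ ((2 - p) / 2) := by
  obtain ⟨hp1, hp2⟩ := hp
  have hp0 : 0 < p := by linarith
  have hq : 0 < p - 1 := by linarith
  have hs : 0 ≤ 2 - p := by linarith
  have ha : 0 < (p - 1) / p := div_pos hq hp0
  have hb : 0 ≤ (2 - p) / (p - 1) := div_nonneg hs hq.le
  have h_split :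
      ((p - 1) / p) ^ (p / 2) = ((p - 1) / p) ^ (p - 1) * ((p - 1) / p) ^ ((2 - p) / 2) := by
    rw [← rpow_add ha]; ring_nf
  have h_inv : (p / (p - 1)) ^ (p - 1) = (((p - 1) / p) ^ (p - 1))⁻¹ := by
    rw [← inv_rpow ha.le, inv_div]
  have h_prod : ((p - 1) / p) ^ ((2 - p) / 2) * ((2 - p) / (p - 1)) ^ ((2 - p) / 2)
      = (2 - p) ^ ((2 - p) / 2) / p ^ ((2 - p) / 2) := by
    rw [← mul_rpow ha.le hb, ← div_rpow hs hp0.le]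
    congr 1; field_simp
  have h_pow : p / p ^ ((2 - p) / 2) = p ^ (p / 2) := by
    calc p / p ^ ((2 - p) / 2) = p ^ (1 - (2 - p) / 2) := by rw [rpow_sub hp0, rpow_one]
      _ = p ^ (p / 2) := by ring_nf
  rw [catoniC, h_split, h_inv, mul_assoc (((p - 1) / p) ^ (p - 1)), h_prod, ← h_pow]
  field_simp

lemma rpow_sub_one_mul_le_rpow {p t₀ t : ℝ} (hp : 1 ≤ p) (ht₀ : 0 < t₀) (ht : 0 ≤ t) :
    t₀ ^ (p - 1) * (p * t - (p - 1) * t₀) ≤ t ^ p := by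
  have h := one_add_mul_self_le_rpow_one_add (s := t / t₀ - 1) (by
    have := div_nonneg ht ht₀.le; linarith) hp
  rw [add_sub_cancel, div_rpow ht ht₀.le, le_div_iff₀ (rpow_pos_of_pos ht₀ p)] at h
  calc t₀ ^ (p - 1) * (p * t - (p - 1) * t₀)
      = (1 + p * (t / t₀ - 1)) * (t₀ ^ (p - 1) * t₀) := by field_simp; ring
    _ = (1 + p * (t / t₀ - 1)) * t₀ ^ p := by rw [← rpow_add_one ht₀.ne', sub_add_cancel]
    _ ≤ t ^ p := h

lemma one_add_add_mul_abs_rpow_pos {p C : ℝ} (hp : 1 < p)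
    (hC : 1 < p * C * (p / (p - 1)) ^ (p - 1)) (x : ℝ) : 0 < 1 + x + C * |x| ^ p := by
  have hp1 : p - 1 ≠ 0 := by linarith
  have hr : 0 < p / (p - 1) := div_pos (by linarith) (by linarith)
  have hC0 : 0 < C := pos_of_mul_pos_right
    (pos_of_mul_pos_left (one_pos.trans hC) (rpow_nonneg hr.le _)) (by linarith)
  set K := p * C * (p / (p - 1)) ^ (p - 1) with hK
  rcases le_or_gt 0 x with hx | hx
  · linarith [mul_nonneg hC0.le (rpow_nonneg (abs_nonneg x) p)]
  set t₀ := p / (p - 1) * K ^ (-(p - 1)⁻¹) with ht₀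
  have hK0 : 0 < K := by linarith
  have h_slope : p * C * t₀ ^ (p - 1) = 1 := by
    rw [ht₀, mul_rpow hr.le (rpow_nonneg hK0.le _), ← rpow_mul hK0.le,
      neg_mul, inv_mul_cancel₀ hp1, rpow_neg_one, ← mul_assoc, ← hK,
      mul_inv_cancel₀ hK0.ne']
  have h_gap : (p - 1) / p * t₀ < 1 := by
    have h_cancel : (p - 1) / p * (p / (p - 1)) = 1 := by field_simp
    rw [ht₀, ← mul_assoc, h_cancel, one_mul]
    exact rpow_lt_one_of_one_lt_of_neg hC (neg_lt_zero.2 (inv_pos.2 (by linarith)))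
  have ht₀_pos : 0 < t₀ := mul_pos hr (rpow_pos_of_pos hK0 _)
  have h_tangent := mul_le_mul_of_nonneg_left
    (rpow_sub_one_mul_le_rpow hp.le ht₀_pos (abs_nonneg x)) hC0.le
  have h_eq : C * (t₀ ^ (p - 1) * (p * |x| - (p - 1) * t₀)) = |x| - (p - 1) / p * t₀ := by
    field_simp
    linear_combination (|x| * p - (p - 1) * t₀) * h_slope
  linarith [abs_of_neg hx]

theorem catoni_log_well_defined (p : ℝ) (hp : p ∈ Set.Ioc (1 : ℝ) 2) (x : ℝ) :
    0 < 1 + x + catoniC p * |x| ^ p := by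
  refine one_add_add_mul_abs_rpow_pos hp.1 ?_ x
  rw [mul_catoniC_mul_rpow_eq hp]
  exact one_lt_rpow_div_two_self_mul (by linarith [hp.1]) (by linarith [hp.2]) (by ring)
    (by linarith [hp.1])
end

section
/- Let p ∈ (1,2] and C_p = ((p-1)/p)^{p/2}·((2-p)/(p-1))^{(2-p)/2}. Let X be a random variable with E[X] = μ and E|X-μ|^p ≤ v_p, and let φ: ℝ → ℝ be a nondecreasing function with -log(1 - x + C_p|x|^p) ≤ φ(x) ≤ log(1 + x + C_p|x|^p) for all x. Then for any λ > 0, E[exp(φ(λ(X - μ)))] ≤ exp(C_p·v_p·λ^p). -/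
open MeasureTheory

/-!
Bound `exp (φ x)` by `1 + x + C_p |x|^p` pointwise; with `x = λ (X - μ)` the linear term has
mean zero, so `E exp (φ (λ (X - μ))) ≤ 1 + C_p λ^p E|X - μ|^p ≤ exp (C_p v_p λ^p)`.
The pointwise bound needs `1 + x + C_p |x|^p > 0`, which is forced by the hypotheses on `φ`.
-/

lemma catoniC_nonneg {p : ℝ} (hp1 : 1 ≤ p) (hp2 : p ≤ 2) : 0 ≤ catoniC p :=
  mul_nonneg (Real.rpow_nonneg (div_nonneg (by linarith) (by linarith)) _)
    (Real.rpow_nonneg (div_nonneg (by linarith) (by linarith)) _)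

/-- At the largest zero `z` of `A`, `exp (φ z) ≤ exp (φ x) ≤ A x` for `x > z`, so letting
`x → z⁺` gives `0 < exp (φ z) ≤ A z ≤ 0`. -/
lemma pos_of_le_log_of_monotone {A φ : ℝ → ℝ} (hA : Continuous A)
    (hbdd : BddAbove {x | A x ≤ 0}) (hφ : Monotone φ) (h : ∀ x, φ x ≤ Real.log (A x))
    (x : ℝ) : 0 < A x := by
  by_contra! hx
  set S := {x | A x ≤ 0}
  have hzS : sSup S ∈ S := (isClosed_le hA continuous_const).csSup_mem ⟨x, hx⟩ hbdd
  have hright : ∀ᶠ y in nhdsWithin (sSup S) (Set.Ioi (sSup S)), Real.exp (φ (sSup S)) ≤ A y := by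
    filter_upwards [self_mem_nhdsWithin] with y hy
    have hAy : 0 < A y := lt_of_not_ge fun hy' => (not_le.2 hy) (le_csSup hbdd hy')
    calc Real.exp (φ (sSup S)) ≤ Real.exp (φ y) := Real.exp_le_exp.2 (hφ (le_of_lt hy))
      _ ≤ A y := (Real.le_log_iff_exp_le hAy).1 (h y)
  have hle : Real.exp (φ (sSup S)) ≤ A (sSup S) :=
    ge_of_tendsto (hA.continuousAt.tendsto.mono_left nhdsWithin_le_nhds) hright
  exact absurd (hle.trans hzS) (not_le.2 (Real.exp_pos _))

lemma exp_le_one_add_add_mul_abs_rpow {p c : ℝ} (hp : 0 ≤ p) (hc : 0 ≤ c) {φ : ℝ → ℝ}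
    (hφ : Monotone φ) (h : ∀ x, φ x ≤ Real.log (1 + x + c * |x| ^ p)) (x : ℝ) :
    Real.exp (φ x) ≤ 1 + x + c * |x| ^ p := by
  have hA : Continuous fun x : ℝ => 1 + x + c * |x| ^ p :=
    by fun_prop (disch := exact fun _ => Or.inr hp)
  have hbdd : BddAbove {x : ℝ | 1 + x + c * |x| ^ p ≤ 0} := by
    refine ⟨0, fun y hy => ?_⟩
    have : 0 ≤ c * |y| ^ p := mul_nonneg hc (Real.rpow_nonneg (abs_nonneg y) p)
    linarith [hy.out]
  exact (Real.le_log_iff_exp_le (pos_of_le_log_of_monotone hA hbdd hφ h x)).1 (h x)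

lemma integral_le_exp_of_le_one_add {Ω : Type*} [MeasurableSpace Ω] {P : Measure Ω}
    [IsProbabilityMeasure P] {f Y R : Ω → ℝ} (hf : ∀ ω, 0 ≤ f ω) (hY : Integrable Y P)
    (hY0 : ∫ ω, Y ω ∂P = 0) (hR : Integrable R P) (hle : ∀ ω, f ω ≤ 1 + Y ω + R ω) :
    ∫ ω, f ω ∂P ≤ Real.exp (∫ ω, R ω ∂P) := by
  have h1Y : Integrable (fun ω => 1 + Y ω) P := (integrable_const 1).add hY
  calc ∫ ω, f ω ∂P ≤ ∫ ω, 1 + Y ω + R ω ∂P :=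
        integral_mono_of_nonneg (.of_forall hf) (h1Y.add hR) (.of_forall hle)
    _ = 1 + ∫ ω, R ω ∂P := by
        rw [integral_add h1Y hR, integral_add (integrable_const 1) hY, hY0]
        simp
    _ ≤ Real.exp (∫ ω, R ω ∂P) := by linarith [Real.add_one_le_exp (∫ ω, R ω ∂P)]

theorem catoni_mgf_bound_general {Ω : Type*} [MeasurableSpace Ω] (P : Measure Ω)
    [IsProbabilityMeasure P]
    (p v_p μ l : ℝ) (hp : p ∈ Set.Ioc (1 : ℝ) 2) (hl : 0 < l)
    (φ : ℝ → ℝ) (hφ : Monotone φ)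
    (hφ_bound : ∀ x : ℝ,
      -Real.log (1 - x + catoniC p * |x| ^ p) ≤ φ x ∧
        φ x ≤ Real.log (1 + x + catoniC p * |x| ^ p))
    (X : Ω → ℝ)
    (hmean : Integrable X P) (hmean' : ∫ ω, X ω ∂P = μ)
    (hmom_int : Integrable (fun ω => |X ω - μ| ^ p) P)
    (hmom : ∫ ω, |X ω - μ| ^ p ∂P ≤ v_p) :
    (∫ ω, Real.exp (φ (l * (X ω - μ))) ∂P) ≤ Real.exp (catoniC p * v_p * l ^ p) := by
  obtain ⟨hp1, hp2⟩ := hp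
  have hc := catoniC_nonneg hp1.le hp2
  have hpt := exp_le_one_add_add_mul_abs_rpow (by linarith) hc hφ fun x => (hφ_bound x).2
  have hY : Integrable (fun ω => l * (X ω - μ)) P := (hmean.sub (integrable_const μ)).const_mul l
  have hY0 : ∫ ω, l * (X ω - μ) ∂P = 0 := by
    rw [integral_const_mul, integral_sub hmean (integrable_const μ), hmean']
    simp
  calc (∫ ω, Real.exp (φ (l * (X ω - μ))) ∂P)
      ≤ Real.exp (∫ ω, catoniC p * l ^ p * |X ω - μ| ^ p ∂P) := by
        refine integral_le_exp_of_le_one_add (fun _ => (Real.exp_pos _).le) hY hY0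
          (hmom_int.const_mul _) fun ω => ?_
        simpa only [abs_mul, abs_of_pos hl, Real.mul_rpow hl.le (abs_nonneg _), mul_assoc]
          using hpt (l * (X ω - μ))
    _ ≤ Real.exp (catoniC p * v_p * l ^ p) := by
        rw [integral_const_mul, mul_right_comm _ v_p]
        exact Real.exp_le_exp.2 (mul_le_mul_of_nonneg_left hmom (mul_nonneg hc (by positivity)))

theorem catoni_mgf_bound {Ω : Type*} [MeasurableSpace Ω] (P : Measure Ω)
    [IsProbabilityMeasure P]
    (p v_p μ l : ℝ) (hp : p ∈ Set.Ioc (1 : ℝ) 2) (hl : 0 < l)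
    (φ : ℝ → ℝ) (hφ : Monotone φ)
    (hφ_bound : ∀ x : ℝ,
      -Real.log (1 - x + catoniC p * |x| ^ p) ≤ φ x ∧
        φ x ≤ Real.log (1 + x + catoniC p * |x| ^ p))
    (X : Ω → ℝ) (hXmeas : Measurable X)
    (hmean : Integrable X P) (hmean' : ∫ ω, X ω ∂P = μ)
    (hmom_int : Integrable (fun ω => |X ω - μ| ^ p) P)
    (hmom : ∫ ω, |X ω - μ| ^ p ∂P ≤ v_p) :
    (∫ ω, Real.exp (φ (l * (X ω - μ))) ∂P) ≤ Real.exp (catoniC p * v_p * l ^ p) :=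
  catoni_mgf_bound_general P p v_p μ l hp hl φ hφ hφ_bound X hmean hmean' hmom_int hmom
end
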